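/- (Theorem 1, part 1, stability.) If R_s < 1/(1−μ) and R_r < 1, then the infection-free steady state E_0 = (λ/d_T, 0, 0, 0, 0, 0, 0) of the system (7CM) is locally asymptotically stable. -/

import Mathlib

set_option maxHeartbeats 1000000

open Filter Set Real
open scoped Topology

/-- The vector field `f` of the model (7CM): state `x = (T, Is, Ls, Vs, Ir, Lr, Vr)`. -/
noncomputable def hivField (lam dT ks kr p mu dI dL αs αr Ns Nr dV : ℝ)
    (x : EuclideanSpace ℝ (Fin 7)) : EuclideanSpace ℝ (Fin 7) :=
  WithLp.toLp 2 ![lam - dT * x 0 - ks * x 0 * x 3 - kr * x 0 * x 6,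
    (1 - p) * (1 - mu) * ks * x 0 * x 3 + αs * x 2 - dI * x 1,
    p * (1 - mu) * ks * x 0 * x 3 - (αs + dL) * x 2,
    Ns * dI * x 1 - dV * x 3,
    (1 - p) * mu * ks * x 0 * x 3 + (1 - p) * kr * x 0 * x 6 + αr * x 5 - dI * x 4,
    p * mu * ks * x 0 * x 3 + p * kr * x 0 * x 6 - (αr + dL) * x 5,
    Nr * dI * x 4 - dV * x 6]

/-- A point `xs` is a locally asymptotically stable equilibrium of `x' = f(x)`:
(i) solutions starting near `xs` stay near it for all `t ≥ 0`, and
(ii) solutions starting close enough converge to `xs` as `t → ∞`. -/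
def IsLocallyAsymptoticallyStable (f : EuclideanSpace ℝ (Fin 7) → EuclideanSpace ℝ (Fin 7))
    (xs : EuclideanSpace ℝ (Fin 7)) : Prop :=
  (∀ ε > 0, ∃ δ > 0, ∀ x : ℝ → EuclideanSpace ℝ (Fin 7),
      (∀ t : ℝ, 0 ≤ t → HasDerivAt x (f (x t)) t) →
      ‖x 0 - xs‖ < δ → ∀ t : ℝ, 0 ≤ t → ‖x t - xs‖ < ε) ∧
  (∃ δ₀ > 0, ∀ x : ℝ → EuclideanSpace ℝ (Fin 7),
      (∀ t : ℝ, 0 ≤ t → HasDerivAt x (f (x t)) t) →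
      ‖x 0 - xs‖ < δ₀ → Filter.Tendsto x Filter.atTop (nhds xs))

/-! ### Auxiliary lemmas -/

private lemma euclid7_coord_le (z : EuclideanSpace ℝ (Fin 7)) (i : Fin 7) : |z i| ≤ ‖z‖ := by
  rw [EuclideanSpace.norm_eq, ← Real.sqrt_sq_eq_abs]
  apply Real.sqrt_le_sqrt
  have := Finset.single_le_sum (f := fun j => ‖z j‖ ^ 2) (fun j _ => by positivity)
    (Finset.mem_univ i)
  simpa [Real.norm_eq_abs, sq_abs] using this

private lemma euclid7_norm_le_sum (z : EuclideanSpace ℝ (Fin 7)) : ‖z‖ ≤ ∑ i, |z i| := by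
  rw [EuclideanSpace.norm_eq]
  have h1 : ∑ i, ‖z i‖ ^ 2 ≤ (∑ i, |z i|) ^ 2 := by
    simp only [Real.norm_eq_abs, Fin.sum_univ_seven]
    nlinarith [abs_nonneg (z 0), abs_nonneg (z 1), abs_nonneg (z 2), abs_nonneg (z 3),
      abs_nonneg (z 4), abs_nonneg (z 5), abs_nonneg (z 6)]
  have h2 : (0:ℝ) ≤ ∑ i, |z i| := Finset.sum_nonneg fun i _ => abs_nonneg _
  calc √(∑ i, ‖z i‖ ^ 2) ≤ √((∑ i, |z i|) ^ 2) := Real.sqrt_le_sqrt h1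
    _ = ∑ i, |z i| := by rw [Real.sqrt_sq h2]

private lemma coord_deriv (x : ℝ → EuclideanSpace ℝ (Fin 7)) (v : EuclideanSpace ℝ (Fin 7))
    (t : ℝ) (hx : HasDerivAt x v t) (i : Fin 7) : HasDerivAt (fun s => x s i) (v i) t := by
  have := (EuclideanSpace.proj (𝕜 := ℝ) i).hasFDerivAt.comp_hasDerivAt t hx
  exact this

private lemma slope_freq (w : Fin 7 → ℝ) (hw : ∀ i, 0 < w i)
    {x : ℝ → EuclideanSpace ℝ (Fin 7)} {v E0 : EuclideanSpace ℝ (Fin 7)} {t : ℝ}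
    (hx : HasDerivAt x v t) {h0 B r : ℝ} (hh0 : 0 < h0)
    (hB : ∀ h : ℝ, 0 < h → h ≤ h0 →
      ∑ i, w i * |x t i - E0 i + h * v i| ≤ (∑ i, w i * |x t i - E0 i|) + h * B)
    (hr : B < r) :
    ∀ᶠ s in 𝓝[>] t,
      (s - t)⁻¹ * ((∑ i, w i * |x s i - E0 i|) - ∑ i, w i * |x t i - E0 i|) < r := by
  set W : ℝ := ∑ i, w i with hW
  have hWpos : 0 < W := Finset.sum_pos (fun i _ => hw i) ⟨0, Finset.mem_univ 0⟩
  set ε' : ℝ := (r - B) / (2 * W) with hε'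
  have hε'pos : 0 < ε' := by
    apply div_pos (by linarith) (by linarith)
  have hslope : ∀ i : Fin 7, ∀ᶠ s in 𝓝[>] t,
      |(x s i - x t i) - (s - t) * v i| ≤ (s - t) * ε' := by
    intro i
    have h1 := (hasDerivAt_iff_tendsto_slope.mp (coord_deriv x v t hx i))
    have h2 : ∀ᶠ s in 𝓝[≠] t, |slope (fun s => x s i) t s - v i| < ε' := by
      have := Metric.tendsto_nhds.mp h1 ε' hε'pos
      simpa [Real.dist_eq] using this
    have h3 : 𝓝[>] t ≤ 𝓝[≠] t := nhdsWithin_mono t (fun s hs => ne_of_gt hs)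
    filter_upwards [h3 h2, self_mem_nhdsWithin] with s hs hst
    have hst' : (0:ℝ) < s - t := by simpa [sub_pos] using hst
    rw [slope_def_field] at hs
    have heq : (x s i - x t i) - (s - t) * v i = (s - t) * ((x s i - x t i) / (s - t) - v i) := by
      field_simp
    rw [heq, abs_mul, abs_of_pos hst']
    exact mul_le_mul_of_nonneg_left hs.le hst'.le
  have hIoc : ∀ᶠ s in 𝓝[>] t, s ∈ Ioc t (t + h0) :=
    Ioc_mem_nhdsGT_of_mem ⟨le_refl t, by linarith⟩
  filter_upwards [hIoc, hslope 0, hslope 1, hslope 2, hslope 3, hslope 4, hslope 5, hslope 6]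
    with s hs e0 e1 e2 e3 e4 e5 e6
  have hst : 0 < s - t := sub_pos.mpr hs.1
  have hsth : s - t ≤ h0 := by linarith [hs.2]
  have tri : ∀ i : Fin 7, |(x s i - x t i) - (s - t) * v i| ≤ (s - t) * ε' →
      |x s i - E0 i| ≤ |x t i - E0 i + (s - t) * v i| + (s - t) * ε' := by
    intro i hi
    calc |x s i - E0 i|
        = |(x t i - E0 i + (s - t) * v i) + ((x s i - x t i) - (s - t) * v i)| := by ring_nf
      _ ≤ |x t i - E0 i + (s - t) * v i| + |(x s i - x t i) - (s - t) * v i| := abs_add_le _ _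
      _ ≤ _ := by linarith
  have sum_le : ∑ i, w i * |x s i - E0 i| ≤
      (∑ i, w i * |x t i - E0 i + (s - t) * v i|) + (s - t) * ε' * W := by
    have hterm : ∀ i : Fin 7, |x s i - E0 i| ≤ |x t i - E0 i + (s - t) * v i| + (s - t) * ε' := by
      intro i; fin_cases i
      exacts [tri 0 e0, tri 1 e1, tri 2 e2, tri 3 e3, tri 4 e4, tri 5 e5, tri 6 e6]
    calc ∑ i, w i * |x s i - E0 i|
        ≤ ∑ i, w i * (|x t i - E0 i + (s - t) * v i| + (s - t) * ε') := by
          apply Finset.sum_le_sum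
          intro i _
          exact mul_le_mul_of_nonneg_left (hterm i) (hw i).le
      _ = (∑ i, w i * |x t i - E0 i + (s - t) * v i|) + (s - t) * ε' * W := by
          rw [hW, Finset.mul_sum, ← Finset.sum_add_distrib]
          congr 1; ext i; ring
  have hBs := hB (s - t) hst hsth
  have key2 : (s - t) * ε' * W < (s - t) * (r - B) := by
    have hW0 : W ≠ 0 := ne_of_gt hWpos
    have heq : (s - t) * ε' * W = (s - t) * ((r - B) / 2) := by
      rw [hε']; field_simp
    rw [heq]
    have h4 : 0 < r - B := by linarith
    apply mul_lt_mul_of_pos_left _ hst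
    linarith
  have hring : (s - t) * B + (s - t) * (r - B) = (s - t) * r := by ring
  have final : ∑ i, w i * |x s i - E0 i| < (∑ i, w i * |x t i - E0 i|) + (s - t) * r := by
    linarith
  rw [inv_mul_lt_iff₀ hst]
  linarith

private lemma decay_lemma {V : ℝ → ℝ} {c C : ℝ} (hc : 0 < c) (hC : 0 < C)
    (hcont : ContinuousOn V (Ici 0)) (hnn : ∀ t, 0 ≤ t → 0 ≤ V t)
    (hslope : ∀ t, 0 ≤ t → ∀ r, -c * V t + C * V t ^ 2 < r →
      ∃ᶠ z in 𝓝[>] t, (z - t)⁻¹ * (V z - V t) < r)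
    (hinit : V 0 < c / (2 * C)) :
    ∀ t, 0 ≤ t → V t ≤ V 0 * exp (-(c / 2) * t) := by
  have hV0 : 0 ≤ V 0 := hnn 0 le_rfl
  have gron : ∀ b : ℝ, 0 ≤ b → (∀ t, 0 ≤ t → t < b → V t < c / (2 * C)) →
      ∀ t ∈ Icc (0:ℝ) b, V t ≤ V 0 * exp (-(c / 2) * t) := by
    intro b hb hsmall t ht
    have h := le_gronwallBound_of_liminf_deriv_right_le (f := V)
      (f' := fun t => -c * V t + C * V t ^ 2) (δ := V 0) (K := -(c / 2)) (ε := 0)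
      (a := 0) (b := b) (hcont.mono Icc_subset_Ici_self)
      (fun s hs r hr => hslope s hs.1 r hr)
      le_rfl
      (fun s hs => by
        have h1 : 0 ≤ V s := hnn s hs.1
        have h2 : V s < c / (2 * C) := hsmall s hs.1 hs.2
        have h4 : V s * V s ≤ c / (2 * C) * V s := mul_le_mul_of_nonneg_right h2.le h1
        have h5 : C * (c / (2 * C)) = c / 2 := by field_simp
        have h3 : C * V s ^ 2 ≤ (c / 2) * V s := by nlinarith
        show -c * V s + C * V s ^ 2 ≤ -(c / 2) * V s + 0
        linarith) t ht
    rwa [gronwallBound_ε0, sub_zero] at h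
  have small : ∀ t, 0 ≤ t → V t < c / (2 * C) := by
    by_contra hcon
    push_neg at hcon
    obtain ⟨t0, ht0, ht0'⟩ := hcon
    set S : Set ℝ := Ici 0 ∩ V ⁻¹' (Ici (c / (2 * C))) with hS
    have hSne : S.Nonempty := ⟨t0, ht0, ht0'⟩
    have hSclosed : IsClosed S := hcont.preimage_isClosed_of_isClosed isClosed_Ici isClosed_Ici
    have hSbdd : BddBelow S := ⟨0, fun s hs => hs.1⟩
    set t1 := sInf S with ht1
    have ht1S : t1 ∈ S := hSclosed.csInf_mem hSne hSbdd
    have ht1nn : 0 ≤ t1 := ht1S.1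
    have hsmall : ∀ t, 0 ≤ t → t < t1 → V t < c / (2 * C) := by
      intro t ht htl
      by_contra hcc
      push_neg at hcc
      exact absurd (csInf_le hSbdd ⟨ht, hcc⟩) (not_le.mpr htl)
    have hg := gron t1 ht1nn hsmall t1 ⟨ht1nn, le_rfl⟩
    have hexp : exp (-(c / 2) * t1) ≤ 1 := by
      apply exp_le_one_iff.mpr
      nlinarith
    have hlt : V t1 < c / (2 * C) := by
      have h5 : V 0 * exp (-(c / 2) * t1) ≤ V 0 := by nlinarith [exp_pos (-(c / 2) * t1)]
      linarith
    exact absurd ht1S.2 (not_le.mpr hlt)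
  intro t ht
  exact gron t ht (fun s hs _ => small s hs) t ⟨ht, le_rfl⟩

private lemma col_bound {col wj c cj : ℝ} (hwj : 0 < wj) (hcj : cj = -col / wj)
    (hc : c ≤ cj) : col ≤ -c * wj := by
  have h1 : cj * wj = -col := by rw [hcj]; field_simp
  nlinarith
lemma exists_weights (a b p mu dT dI dL αs αr Ns Nr dV : ℝ)
    (ha : 0 < a) (hb : 0 < b) (hdT : 0 < dT) (hdI : 0 < dI) (hdL : 0 < dL)
    (hαs : 0 < αs) (hαr : 0 < αr) (hNs : 0 < Ns) (hNr : 0 < Nr) (hdV : 0 < dV)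
    (hp1 : 0 < p) (hp2 : p < 1) (hmu1 : 0 < mu) (hmu2 : mu < 1)
    (Hs : (1 - mu) * a * Ns * (αs + (1 - p) * dL) < dV * (αs + dL))
    (Hr : b * Nr * (αr + (1 - p) * dL) < dV * (αr + dL)) :
    ∃ w0 w1 w2 w3 w4 w5 w6 c : ℝ,
      0 < w0 ∧ 0 < w1 ∧ 0 < w2 ∧ 0 < w3 ∧ 0 < w4 ∧ 0 < w5 ∧ 0 < w6 ∧ 0 < c ∧
      (-dT * w0 ≤ -c * w0) ∧
      (-dI * w1 + Ns * dI * w3 ≤ -c * w1) ∧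
      (αs * w1 - (αs + dL) * w2 ≤ -c * w2) ∧
      (a * w0 + (1-p)*(1-mu)*a*w1 + p*(1-mu)*a*w2 + (1-p)*mu*a*w4 + p*mu*a*w5 - dV*w3 ≤ -c * w3) ∧
      (-dI * w4 + Nr * dI * w6 ≤ -c * w4) ∧
      (αr * w4 - (αr + dL) * w5 ≤ -c * w5) ∧
      (b * w0 + (1-p)*b*w4 + p*b*w5 - dV*w6 ≤ -c * w6) := by
  have hps : 0 < 1 - p := by linarith
  have hmus : 0 < 1 - mu := by linarith
  have hAs : 0 < αs + (1 - p) * dL := by nlinarith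
  have hAr : 0 < αr + (1 - p) * dL := by nlinarith
  have hαsdL : 0 < αs + dL := by linarith
  have hαrdL : 0 < αr + dL := by linarith
  obtain ⟨Ps, hPs⟩ : ∃ q : ℝ, q = (1 - mu) * a * (αs + (1 - p) * dL) / (αs + dL) := ⟨_, rfl⟩
  obtain ⟨Pr, hPr⟩ : ∃ q : ℝ, q = b * (αr + (1 - p) * dL) / (αr + dL) := ⟨_, rfl⟩
  have hPs0 : 0 < Ps := by rw [hPs]; exact div_pos (mul_pos (mul_pos hmus ha) hAs) hαsdL
  have hPr0 : 0 < Pr := by rw [hPr]; exact div_pos (mul_pos hb hAr) hαrdL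
  obtain ⟨v, hv⟩ : ∃ q : ℝ, q = dV / Ns - Ps := ⟨_, rfl⟩
  obtain ⟨u, hu⟩ : ∃ q : ℝ, q = dV / Nr - Pr := ⟨_, rfl⟩
  have hv0 : 0 < v := by
    rw [hv, sub_pos, hPs, div_lt_div_iff₀ hαsdL hNs]; nlinarith
  have hu0 : 0 < u := by
    rw [hu, sub_pos, hPr, div_lt_div_iff₀ hαrdL hNr]; nlinarith
  have hNsv : Ns * v = dV - Ns * Ps := by
    rw [hv, mul_sub, mul_div_cancel₀ _ (ne_of_gt hNs)]
  have hNru : Nr * u = dV - Nr * Pr := by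
    rw [hu, mul_sub, mul_div_cancel₀ _ (ne_of_gt hNr)]
  obtain ⟨es, hes⟩ : ∃ q : ℝ, q = v * (αs + dL) / (8 * (1 - mu) * a * p) := ⟨_, rfl⟩
  have hes0 : 0 < es := by
    rw [hes]; exact div_pos (mul_pos hv0 hαsdL) (by positivity)
  obtain ⟨e, he⟩ : ∃ q : ℝ, q = u * (αr + dL) / (8 * b * p) := ⟨_, rfl⟩
  have he0 : 0 < e := by
    rw [he]; exact div_pos (mul_pos hu0 hαrdL) (by positivity)
  obtain ⟨ρ, hρ⟩ : ∃ q : ℝ, q = (1 - p) * mu * a + p * mu * a * ((αr + e) / (αr + dL)) := ⟨_, rfl⟩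
  have hρ0 : 0 < ρ := by
    rw [hρ]
    have h1 : 0 < (1 - p) * mu * a := by positivity
    have h2 : 0 < p * mu * a * ((αr + e) / (αr + dL)) := by
      apply mul_pos (by positivity) (div_pos (by linarith) hαrdL)
    linarith
  obtain ⟨θ, hθ⟩ : ∃ q : ℝ, q = v / (8 * ρ) := ⟨_, rfl⟩
  have hθ0 : 0 < θ := by rw [hθ]; exact div_pos hv0 (by positivity)
  obtain ⟨w2, hw2⟩ : ∃ q : ℝ, q = (αs + es) / (αs + dL) := ⟨_, rfl⟩
  obtain ⟨w3, hw3⟩ : ∃ q : ℝ, q = (Ps + v / 2) / dV := ⟨_, rfl⟩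
  obtain ⟨w5, hw5⟩ : ∃ q : ℝ, q = θ * ((αr + e) / (αr + dL)) := ⟨_, rfl⟩
  obtain ⟨w6, hw6⟩ : ∃ q : ℝ, q = θ * (Pr + u / 2) / dV := ⟨_, rfl⟩
  obtain ⟨w0, hw0⟩ : ∃ q : ℝ, q = min (θ * u / (8 * b)) (v / (8 * a)) := ⟨_, rfl⟩
  have hw00 : 0 < w0 := by
    rw [hw0]
    exact lt_min (div_pos (mul_pos hθ0 hu0) (by positivity)) (div_pos hv0 (by positivity))
  have hw20 : 0 < w2 := by
    rw [hw2]; exact div_pos (by linarith) hαsdL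
  have hw30 : 0 < w3 := by
    rw [hw3]; exact div_pos (by linarith) hdV
  have hw50 : 0 < w5 := by
    rw [hw5]; exact mul_pos hθ0 (div_pos (by linarith) hαrdL)
  have hw60 : 0 < w6 := by
    rw [hw6]; exact div_pos (mul_pos hθ0 (by linarith)) hdV
  -- strict column inequalities
  have col0 : -dT * w0 < 0 := by have h := mul_pos hdT hw00; linarith
  have hNsw3 : Ns * w3 < 1 := by
    rw [hw3, show Ns * ((Ps + v / 2) / dV) = Ns * (Ps + v / 2) / dV from by ring,
      div_lt_one hdV]
    linarith [mul_pos hNs hv0, hNsv]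
  have col1 : -dI * 1 + Ns * dI * w3 < 0 := by
    have h : Ns * dI * w3 = dI * (Ns * w3) := by ring
    rw [h]
    have h2 := mul_lt_mul_of_pos_left hNsw3 hdI
    linarith
  have col2 : αs * 1 - (αs + dL) * w2 < 0 := by
    rw [hw2, mul_div_cancel₀ _ (ne_of_gt hαsdL)]
    linarith
  have col5 : αr * θ - (αr + dL) * w5 < 0 := by
    have h1 : (αr + dL) * w5 = θ * (αr + e) := by
      rw [hw5]; field_simp
    rw [h1]
    have h2 : αr * θ - θ * (αr + e) = -(θ * e) := by ring
    rw [h2]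
    linarith [mul_pos hθ0 he0]
  have hNrw6 : Nr * w6 < θ := by
    rw [hw6, show Nr * (θ * (Pr + u / 2) / dV) = Nr * (θ * (Pr + u / 2)) / dV from by ring,
      div_lt_iff₀ hdV]
    have h3 : Nr * (Pr + u / 2) < dV := by linarith [mul_pos hNr hu0, hNru]
    have h4 := mul_lt_mul_of_pos_left h3 hθ0
    linarith [h4]
  have col4 : -dI * θ + Nr * dI * w6 < 0 := by
    have h : Nr * dI * w6 = dI * (Nr * w6) := by ring
    rw [h]
    have h2 := mul_lt_mul_of_pos_left hNrw6 hdI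
    linarith
  have I6 : (1 - p) * b * θ + p * b * w5 = θ * (Pr + u / 8) := by
    rw [hw5, hPr, he]
    field_simp [hb.ne', hp1.ne', hαrdL.ne']
    ring
  have I6b : dV * w6 = θ * (Pr + u / 2) := by
    rw [hw6]; field_simp
  have hbw0 : b * w0 ≤ θ * u / 8 := by
    have h1 : w0 ≤ θ * u / (8 * b) := by rw [hw0]; exact min_le_left _ _
    have h2 : b * (θ * u / (8 * b)) = θ * u / 8 := by field_simp
    calc b * w0 ≤ b * (θ * u / (8 * b)) := mul_le_mul_of_nonneg_left h1 hb.le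
      _ = θ * u / 8 := h2
  have col6 : b * w0 + (1 - p) * b * θ + p * b * w5 - dV * w6 < 0 := by
    rw [I6b]
    linarith [I6, hbw0, mul_pos hθ0 hu0]
  have I3 : (1 - p) * (1 - mu) * a * 1 + p * (1 - mu) * a * w2 = Ps + v / 8 := by
    rw [hw2, hPs, hes]
    field_simp [hmus.ne', ha.ne', hp1.ne', hαsdL.ne']
    ring
  have I3b : (1 - p) * mu * a * θ + p * mu * a * w5 = θ * ρ := by
    rw [hw5, hρ]; ring
  have I3c : θ * ρ = v / 8 := by
    rw [hθ]; field_simp [hρ0.ne']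
  have I3d : dV * w3 = Ps + v / 2 := by
    rw [hw3]; field_simp
  have haw0 : a * w0 ≤ v / 8 := by
    have h1 : w0 ≤ v / (8 * a) := by rw [hw0]; exact min_le_right _ _
    have h2 : a * (v / (8 * a)) = v / 8 := by field_simp
    calc a * w0 ≤ a * (v / (8 * a)) := mul_le_mul_of_nonneg_left h1 ha.le
      _ = v / 8 := h2
  have col3 : a * w0 + (1-p)*(1-mu)*a*1 + p*(1-mu)*a*w2 + (1-p)*mu*a*θ + p*mu*a*w5 - dV*w3 < 0 := by
    rw [I3d]
    linarith [I3, I3b, I3c, haw0, hv0]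
  -- assemble c
  obtain ⟨c1, hc1⟩ : ∃ q : ℝ, q = -(-dI * 1 + Ns * dI * w3) / 1 := ⟨_, rfl⟩
  obtain ⟨c2, hc2⟩ : ∃ q : ℝ, q = -(αs * 1 - (αs + dL) * w2) / w2 := ⟨_, rfl⟩
  obtain ⟨c3, hc3⟩ : ∃ q : ℝ, q = -(a * w0 + (1-p)*(1-mu)*a*1 + p*(1-mu)*a*w2 + (1-p)*mu*a*θ + p*mu*a*w5 - dV*w3) / w3 := ⟨_, rfl⟩
  obtain ⟨c4, hc4⟩ : ∃ q : ℝ, q = -(-dI * θ + Nr * dI * w6) / θ := ⟨_, rfl⟩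
  obtain ⟨c5, hc5⟩ : ∃ q : ℝ, q = -(αr * θ - (αr + dL) * w5) / w5 := ⟨_, rfl⟩
  obtain ⟨c6, hc6⟩ : ∃ q : ℝ, q = -(b * w0 + (1-p)*b*θ + p*b*w5 - dV*w6) / w6 := ⟨_, rfl⟩
  obtain ⟨c, hcdef⟩ : ∃ q : ℝ, q = min dT (min c1 (min c2 (min c3 (min c4 (min c5 c6))))) := ⟨_, rfl⟩
  have hc10 : 0 < c1 := by rw [hc1]; exact div_pos (by linarith) one_pos
  have hc20 : 0 < c2 := by rw [hc2]; exact div_pos (by linarith) hw20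
  have hc30 : 0 < c3 := by rw [hc3]; exact div_pos (by linarith) hw30
  have hc40 : 0 < c4 := by rw [hc4]; exact div_pos (by linarith) hθ0
  have hc50 : 0 < c5 := by rw [hc5]; exact div_pos (by linarith) hw50
  have hc60 : 0 < c6 := by rw [hc6]; exact div_pos (by linarith) hw60
  have hc0 : 0 < c := by
    rw [hcdef]
    exact lt_min hdT (lt_min hc10 (lt_min hc20 (lt_min hc30 (lt_min hc40 (lt_min hc50 hc60)))))
  have hcd : c ≤ dT := by rw [hcdef]; exact min_le_left _ _
  have hcc1 : c ≤ c1 := by rw [hcdef]; exact le_trans (min_le_right _ _) (min_le_left _ _)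
  have hcc2 : c ≤ c2 := by
    rw [hcdef]; exact le_trans (min_le_right _ _) (le_trans (min_le_right _ _) (min_le_left _ _))
  have hcc3 : c ≤ c3 := by
    rw [hcdef]
    exact le_trans (min_le_right _ _) (le_trans (min_le_right _ _) (le_trans (min_le_right _ _) (min_le_left _ _)))
  have hcc4 : c ≤ c4 := by
    rw [hcdef]
    exact le_trans (min_le_right _ _) (le_trans (min_le_right _ _) (le_trans (min_le_right _ _) (le_trans (min_le_right _ _) (min_le_left _ _))))
  have hcc5 : c ≤ c5 := by
    rw [hcdef]
    exact le_trans (min_le_right _ _) (le_trans (min_le_right _ _) (le_trans (min_le_right _ _) (le_trans (min_le_right _ _) (le_trans (min_le_right _ _) (min_le_left _ _)))))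
  have hcc6 : c ≤ c6 := by
    rw [hcdef]
    exact le_trans (min_le_right _ _) (le_trans (min_le_right _ _) (le_trans (min_le_right _ _) (le_trans (min_le_right _ _) (le_trans (min_le_right _ _) (min_le_right _ _)))))
  refine ⟨w0, 1, w2, w3, θ, w5, w6, c, hw00, one_pos, hw20, hw30, hθ0, hw50, hw60, hc0, ?_, ?_, ?_, ?_, ?_, ?_, ?_⟩
  · have h := mul_le_mul_of_nonneg_right hcd hw00.le
    linarith
  · exact col_bound one_pos hc1 hcc1
  · exact col_bound hw20 hc2 hcc2
  · exact col_bound hw30 hc3 hcc3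
  · exact col_bound hθ0 hc4 hcc4
  · exact col_bound hw50 hc5 hcc5
  · exact col_bound hw60 hc6 hcc6
private lemma habs (cf x : ℝ) (hc : 0 ≤ cf) : |cf * x| = cf * |x| := by
  rw [abs_mul, abs_of_nonneg hc]

private lemma habsn (cf x : ℝ) (hc : 0 ≤ cf) : |(-(cf)) * x| = cf * |x| := by
  rw [neg_mul, abs_neg, habs cf x hc]

private lemma habsp (cf x y : ℝ) (hc : 0 ≤ cf) : |cf * (x * y)| = cf * (|x| * |y|) := by
  rw [habs _ _ hc, abs_mul]

private lemma habspn (cf x y : ℝ) (hc : 0 ≤ cf) : |(-(cf)) * (x * y)| = cf * (|x| * |y|) := by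
  rw [neg_mul, abs_neg, habsp cf x y hc]

private lemma tri2 {y A B : ℝ} (h : y = A + B) : |y| ≤ |A| + |B| := h ▸ abs_add_le A B

private lemma tri3 {y A B C : ℝ} (h : y = A + B + C) : |y| ≤ |A| + |B| + |C| := by
  subst h; calc |A + B + C| ≤ |A + B| + |C| := abs_add_le _ _
    _ ≤ |A| + |B| + |C| := by linarith [abs_add_le A B]

private lemma tri4 {y A B C D : ℝ} (h : y = A + B + C + D) : |y| ≤ |A| + |B| + |C| + |D| := by
  subst h; calc |A + B + C + D| ≤ |A + B + C| + |D| := abs_add_le _ _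
    _ ≤ |A| + |B| + |C| + |D| := by linarith [tri3 (rfl : A + B + C = A + B + C)]

private lemma tri5 {y A B C D E : ℝ} (h : y = A + B + C + D + E) :
    |y| ≤ |A| + |B| + |C| + |D| + |E| := by
  subst h; calc |A + B + C + D + E| ≤ |A + B + C + D| + |E| := abs_add_le _ _
    _ ≤ _ := by linarith [tri4 (rfl : A + B + C + D = A + B + C + D)]

private lemma tri6 {y A B C D E F : ℝ} (h : y = A + B + C + D + E + F) :
    |y| ≤ |A| + |B| + |C| + |D| + |E| + |F| := by
  subst h; calc |A + B + C + D + E + F| ≤ |A + B + C + D + E| + |F| := abs_add_le _ _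
    _ ≤ _ := by linarith [tri5 (rfl : A + B + C + D + E = A + B + C + D + E)]

lemma key_ineq (a b ks kr p mu dT dI dL αs αr Ns Nr dV w0 w1 w2 w3 w4 w5 w6 c Cc D : ℝ)
    (ha : 0 < a) (hb : 0 < b) (hks : 0 < ks) (hkr : 0 < kr)
    (hdT : 0 < dT) (hdI : 0 < dI) (hdL : 0 < dL) (hαs : 0 < αs) (hαr : 0 < αr)
    (hNs : 0 < Ns) (hNr : 0 < Nr) (hdV : 0 < dV)
    (hp1 : 0 < p) (hp2 : p < 1) (hmu1 : 0 < mu) (hmu2 : mu < 1)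
    (hw00 : 0 < w0) (hw10 : 0 < w1) (hw20 : 0 < w2) (hw30 : 0 < w3)
    (hw40 : 0 < w4) (hw50 : 0 < w5) (hw60 : 0 < w6)
    (hD : D = dT + dI + (αs + dL) + dV + (αr + dL) + 1)
    (hCc : Cc = (ks*w0 + (1-p)*(1-mu)*ks*w1 + p*(1-mu)*ks*w2 + (1-p)*mu*ks*w4 + p*mu*ks*w5)/(w0*w3)
        + (kr*w0 + (1-p)*kr*w4 + p*kr*w5)/(w0*w6))
    (hcol0 : -dT * w0 ≤ -c * w0)
    (hcol1 : -dI * w1 + Ns * dI * w3 ≤ -c * w1)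
    (hcol2 : αs * w1 - (αs + dL) * w2 ≤ -c * w2)
    (hcol3 : a * w0 + (1-p)*(1-mu)*a*w1 + p*(1-mu)*a*w2 + (1-p)*mu*a*w4 + p*mu*a*w5 - dV*w3 ≤ -c * w3)
    (hcol4 : -dI * w4 + Nr * dI * w6 ≤ -c * w4)
    (hcol5 : αr * w4 - (αr + dL) * w5 ≤ -c * w5)
    (hcol6 : b * w0 + (1-p)*b*w4 + p*b*w5 - dV*w6 ≤ -c * w6)
    (z0 z1 z2 z3 z4 z5 z6 h V : ℝ) (hh : 0 < h) (hhD : h * D ≤ 1)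
    (hV : V = w0*|z0| + w1*|z1| + w2*|z2| + w3*|z3| + w4*|z4| + w5*|z5| + w6*|z6|) :
    w0*|z0 + h*(-dT*z0 - a*z3 - b*z6 - ks*(z0*z3) - kr*(z0*z6))|
    + w1*|z1 + h*((1-p)*(1-mu)*(a*z3 + ks*(z0*z3)) + αs*z2 - dI*z1)|
    + w2*|z2 + h*(p*(1-mu)*(a*z3 + ks*(z0*z3)) - (αs+dL)*z2)|
    + w3*|z3 + h*(Ns*dI*z1 - dV*z3)|
    + w4*|z4 + h*((1-p)*mu*(a*z3 + ks*(z0*z3)) + (1-p)*(b*z6 + kr*(z0*z6)) + αr*z5 - dI*z4)|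
    + w5*|z5 + h*(p*mu*(a*z3 + ks*(z0*z3)) + p*(b*z6 + kr*(z0*z6)) - (αr+dL)*z5)|
    + w6*|z6 + h*(Nr*dI*z4 - dV*z6)|
    ≤ V + h * (-c * V + Cc * V^2) := by
  have hps : 0 < 1 - p := by linarith
  have hmus : 0 < 1 - mu := by linarith
  -- diagonal coefficients are ≤ 1/h
  have hdTD : h * dT ≤ 1 := by nlinarith
  have hdID : h * dI ≤ 1 := by nlinarith
  have hαsD : h * (αs + dL) ≤ 1 := by nlinarith
  have hdVD : h * dV ≤ 1 := by nlinarith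
  have hαrD : h * (αr + dL) ≤ 1 := by nlinarith
  -- row bounds
  have t0 : |z0 + h*(-dT*z0 - a*z3 - b*z6 - ks*(z0*z3) - kr*(z0*z6))| ≤
      (1 - h*dT)*|z0| + (h*a)*|z3| + (h*b)*|z6| + (h*ks)*(|z0| * |z3|) + (h*kr)*(|z0| * |z6|) := by
    have e : z0 + h*(-dT*z0 - a*z3 - b*z6 - ks*(z0*z3) - kr*(z0*z6)) =
        (1 - h*dT)*z0 + (-(h*a))*z3 + (-(h*b))*z6 + (-(h*ks))*(z0*z3) + (-(h*kr))*(z0*z6) := by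
      ring
    refine le_trans (tri5 e) (le_of_eq ?_)
    rw [habs (1 - h*dT) z0 (by linarith), habsn (h*a) z3 (by positivity),
      habsn (h*b) z6 (by positivity), habspn (h*ks) z0 z3 (by positivity),
      habspn (h*kr) z0 z6 (by positivity)]
  have t1 : |z1 + h*((1-p)*(1-mu)*(a*z3 + ks*(z0*z3)) + αs*z2 - dI*z1)| ≤
      (1 - h*dI)*|z1| + (h*αs)*|z2| + (h*((1-p)*(1-mu)*a))*|z3| + (h*((1-p)*(1-mu)*ks))*(|z0| * |z3|) := by
    have e : z1 + h*((1-p)*(1-mu)*(a*z3 + ks*(z0*z3)) + αs*z2 - dI*z1) =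
        (1 - h*dI)*z1 + (h*αs)*z2 + (h*((1-p)*(1-mu)*a))*z3 + (h*((1-p)*(1-mu)*ks))*(z0*z3) := by
      ring
    have c3 : (0:ℝ) ≤ h*((1-p)*(1-mu)*a) :=
      mul_nonneg hh.le (mul_nonneg (mul_nonneg hps.le hmus.le) ha.le)
    have c4 : (0:ℝ) ≤ h*((1-p)*(1-mu)*ks) :=
      mul_nonneg hh.le (mul_nonneg (mul_nonneg hps.le hmus.le) hks.le)
    refine le_trans (tri4 e) (le_of_eq ?_)
    rw [habs (1 - h*dI) z1 (by linarith), habs (h*αs) z2 (by positivity),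
      habs _ z3 c3, habsp _ z0 z3 c4]
  have t2 : |z2 + h*(p*(1-mu)*(a*z3 + ks*(z0*z3)) - (αs+dL)*z2)| ≤
      (1 - h*(αs+dL))*|z2| + (h*(p*(1-mu)*a))*|z3| + (h*(p*(1-mu)*ks))*(|z0| * |z3|) := by
    have e : z2 + h*(p*(1-mu)*(a*z3 + ks*(z0*z3)) - (αs+dL)*z2) =
        (1 - h*(αs+dL))*z2 + (h*(p*(1-mu)*a))*z3 + (h*(p*(1-mu)*ks))*(z0*z3) := by ring
    have c3 : (0:ℝ) ≤ h*(p*(1-mu)*a) :=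
      mul_nonneg hh.le (mul_nonneg (mul_nonneg hp1.le hmus.le) ha.le)
    have c4 : (0:ℝ) ≤ h*(p*(1-mu)*ks) :=
      mul_nonneg hh.le (mul_nonneg (mul_nonneg hp1.le hmus.le) hks.le)
    refine le_trans (tri3 e) (le_of_eq ?_)
    rw [habs (1 - h*(αs+dL)) z2 (by linarith), habs _ z3 c3, habsp _ z0 z3 c4]
  have t3 : |z3 + h*(Ns*dI*z1 - dV*z3)| ≤ (1 - h*dV)*|z3| + (h*(Ns*dI))*|z1| := by
    have e : z3 + h*(Ns*dI*z1 - dV*z3) = (1 - h*dV)*z3 + (h*(Ns*dI))*z1 := by ring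
    refine le_trans (tri2 e) (le_of_eq ?_)
    rw [habs (1 - h*dV) z3 (by linarith), habs (h*(Ns*dI)) z1 (by positivity)]
  have t4 : |z4 + h*((1-p)*mu*(a*z3 + ks*(z0*z3)) + (1-p)*(b*z6 + kr*(z0*z6)) + αr*z5 - dI*z4)| ≤
      (1 - h*dI)*|z4| + (h*αr)*|z5| + (h*((1-p)*mu*a))*|z3| + (h*((1-p)*mu*ks))*(|z0| * |z3|)
        + (h*((1-p)*b))*|z6| + (h*((1-p)*kr))*(|z0| * |z6|) := by
    have e : z4 + h*((1-p)*mu*(a*z3 + ks*(z0*z3)) + (1-p)*(b*z6 + kr*(z0*z6)) + αr*z5 - dI*z4) =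
        (1 - h*dI)*z4 + (h*αr)*z5 + (h*((1-p)*mu*a))*z3 + (h*((1-p)*mu*ks))*(z0*z3)
          + (h*((1-p)*b))*z6 + (h*((1-p)*kr))*(z0*z6) := by ring
    have c3 : (0:ℝ) ≤ h*((1-p)*mu*a) :=
      mul_nonneg hh.le (mul_nonneg (mul_nonneg hps.le hmu1.le) ha.le)
    have c4 : (0:ℝ) ≤ h*((1-p)*mu*ks) :=
      mul_nonneg hh.le (mul_nonneg (mul_nonneg hps.le hmu1.le) hks.le)
    have c5 : (0:ℝ) ≤ h*((1-p)*b) := mul_nonneg hh.le (mul_nonneg hps.le hb.le)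
    have c6 : (0:ℝ) ≤ h*((1-p)*kr) := mul_nonneg hh.le (mul_nonneg hps.le hkr.le)
    refine le_trans (tri6 e) (le_of_eq ?_)
    rw [habs (1 - h*dI) z4 (by linarith), habs (h*αr) z5 (by positivity),
      habs _ z3 c3, habsp _ z0 z3 c4, habs _ z6 c5, habsp _ z0 z6 c6]
  have t5 : |z5 + h*(p*mu*(a*z3 + ks*(z0*z3)) + p*(b*z6 + kr*(z0*z6)) - (αr+dL)*z5)| ≤
      (1 - h*(αr+dL))*|z5| + (h*(p*mu*a))*|z3| + (h*(p*mu*ks))*(|z0| * |z3|)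
        + (h*(p*b))*|z6| + (h*(p*kr))*(|z0| * |z6|) := by
    have e : z5 + h*(p*mu*(a*z3 + ks*(z0*z3)) + p*(b*z6 + kr*(z0*z6)) - (αr+dL)*z5) =
        (1 - h*(αr+dL))*z5 + (h*(p*mu*a))*z3 + (h*(p*mu*ks))*(z0*z3)
          + (h*(p*b))*z6 + (h*(p*kr))*(z0*z6) := by ring
    have c3 : (0:ℝ) ≤ h*(p*mu*a) :=
      mul_nonneg hh.le (mul_nonneg (mul_nonneg hp1.le hmu1.le) ha.le)
    have c4 : (0:ℝ) ≤ h*(p*mu*ks) :=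
      mul_nonneg hh.le (mul_nonneg (mul_nonneg hp1.le hmu1.le) hks.le)
    have c5 : (0:ℝ) ≤ h*(p*b) := mul_nonneg hh.le (mul_nonneg hp1.le hb.le)
    have c6 : (0:ℝ) ≤ h*(p*kr) := mul_nonneg hh.le (mul_nonneg hp1.le hkr.le)
    refine le_trans (tri5 e) (le_of_eq ?_)
    rw [habs (1 - h*(αr+dL)) z5 (by linarith), habs _ z3 c3, habsp _ z0 z3 c4,
      habs _ z6 c5, habsp _ z0 z6 c6]
  have t6 : |z6 + h*(Nr*dI*z4 - dV*z6)| ≤ (1 - h*dV)*|z6| + (h*(Nr*dI))*|z4| := by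
    have e : z6 + h*(Nr*dI*z4 - dV*z6) = (1 - h*dV)*z6 + (h*(Nr*dI))*z4 := by ring
    refine le_trans (tri2 e) (le_of_eq ?_)
    rw [habs (1 - h*dV) z6 (by linarith), habs (h*(Nr*dI)) z4 (by positivity)]
  -- weighted sum
  have S0 := mul_le_mul_of_nonneg_left t0 hw00.le
  have S1 := mul_le_mul_of_nonneg_left t1 hw10.le
  have S2 := mul_le_mul_of_nonneg_left t2 hw20.le
  have S3 := mul_le_mul_of_nonneg_left t3 hw30.le
  have S4 := mul_le_mul_of_nonneg_left t4 hw40.le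
  have S5 := mul_le_mul_of_nonneg_left t5 hw50.le
  have S6 := mul_le_mul_of_nonneg_left t6 hw60.le
  -- column regrouping identity
  have expand :
      w0*((1 - h*dT)*|z0| + (h*a)*|z3| + (h*b)*|z6| + (h*ks)*(|z0| * |z3|) + (h*kr)*(|z0| * |z6|))
      + w1*((1 - h*dI)*|z1| + (h*αs)*|z2| + (h*((1-p)*(1-mu)*a))*|z3| + (h*((1-p)*(1-mu)*ks))*(|z0| * |z3|))
      + w2*((1 - h*(αs+dL))*|z2| + (h*(p*(1-mu)*a))*|z3| + (h*(p*(1-mu)*ks))*(|z0| * |z3|))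
      + w3*((1 - h*dV)*|z3| + (h*(Ns*dI))*|z1|)
      + w4*((1 - h*dI)*|z4| + (h*αr)*|z5| + (h*((1-p)*mu*a))*|z3| + (h*((1-p)*mu*ks))*(|z0| * |z3|)
          + (h*((1-p)*b))*|z6| + (h*((1-p)*kr))*(|z0| * |z6|))
      + w5*((1 - h*(αr+dL))*|z5| + (h*(p*mu*a))*|z3| + (h*(p*mu*ks))*(|z0| * |z3|)
          + (h*(p*b))*|z6| + (h*(p*kr))*(|z0| * |z6|))
      + w6*((1 - h*dV)*|z6| + (h*(Nr*dI))*|z4|)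
      = V + h * ((-dT * w0) * |z0|
          + (-dI * w1 + Ns * dI * w3) * |z1|
          + (αs * w1 - (αs + dL) * w2) * |z2|
          + (a * w0 + (1-p)*(1-mu)*a*w1 + p*(1-mu)*a*w2 + (1-p)*mu*a*w4 + p*mu*a*w5 - dV*w3) * |z3|
          + (-dI * w4 + Nr * dI * w6) * |z4|
          + (αr * w4 - (αr + dL) * w5) * |z5|
          + (b * w0 + (1-p)*b*w4 + p*b*w5 - dV*w6) * |z6|
          + (ks*w0 + (1-p)*(1-mu)*ks*w1 + p*(1-mu)*ks*w2 + (1-p)*mu*ks*w4 + p*mu*ks*w5) * (|z0| * |z3|)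
          + (kr*w0 + (1-p)*kr*w4 + p*kr*w5) * (|z0| * |z6|)) := by
    rw [hV]; ring
  -- bound the bracket
  have P0 := mul_le_mul_of_nonneg_right hcol0 (abs_nonneg z0)
  have P1 := mul_le_mul_of_nonneg_right hcol1 (abs_nonneg z1)
  have P2 := mul_le_mul_of_nonneg_right hcol2 (abs_nonneg z2)
  have P3 := mul_le_mul_of_nonneg_right hcol3 (abs_nonneg z3)
  have P4 := mul_le_mul_of_nonneg_right hcol4 (abs_nonneg z4)
  have P5 := mul_le_mul_of_nonneg_right hcol5 (abs_nonneg z5)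
  have P6 := mul_le_mul_of_nonneg_right hcol6 (abs_nonneg z6)
  -- nonlinear part
  have m0 := mul_nonneg hw00.le (abs_nonneg z0)
  have m1 := mul_nonneg hw10.le (abs_nonneg z1)
  have m2 := mul_nonneg hw20.le (abs_nonneg z2)
  have m3 := mul_nonneg hw30.le (abs_nonneg z3)
  have m4 := mul_nonneg hw40.le (abs_nonneg z4)
  have m5 := mul_nonneg hw50.le (abs_nonneg z5)
  have m6 := mul_nonneg hw60.le (abs_nonneg z6)
  have hVnn : 0 ≤ V := by rw [hV]; linarith only [m0, m1, m2, m3, m4, m5, m6]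
  have hw0Z : w0 * |z0| ≤ V := by rw [hV]; linarith only [m1, m2, m3, m4, m5, m6]
  have hw3Z : w3 * |z3| ≤ V := by rw [hV]; linarith only [m0, m1, m2, m4, m5, m6]
  have hw6Z : w6 * |z6| ≤ V := by rw [hV]; linarith only [m0, m1, m2, m3, m4, m5]
  have hZZ3 : |z0| * |z3| ≤ V^2 / (w0 * w3) := by
    rw [le_div_iff₀ (mul_pos hw00 hw30)]
    have hmm := mul_le_mul hw0Z hw3Z m3 hVnn
    nlinarith only [hmm]
  have hZZ6 : |z0| * |z6| ≤ V^2 / (w0 * w6) := by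
    rw [le_div_iff₀ (mul_pos hw00 hw60)]
    have hmm := mul_le_mul hw0Z hw6Z m6 hVnn
    nlinarith only [hmm]
  have hNL3 : 0 ≤ ks*w0 + (1-p)*(1-mu)*ks*w1 + p*(1-mu)*ks*w2 + (1-p)*mu*ks*w4 + p*mu*ks*w5 := by
    have q1 := mul_nonneg (mul_nonneg (mul_nonneg hps.le hmus.le) hks.le) hw10.le
    have q2 := mul_nonneg (mul_nonneg (mul_nonneg hp1.le hmus.le) hks.le) hw20.le
    have q3 := mul_nonneg (mul_nonneg (mul_nonneg hps.le hmu1.le) hks.le) hw40.le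
    have q4 := mul_nonneg (mul_nonneg (mul_nonneg hp1.le hmu1.le) hks.le) hw50.le
    linarith only [q1, q2, q3, q4, mul_pos hks hw00]
  have hNL6 : 0 ≤ kr*w0 + (1-p)*kr*w4 + p*kr*w5 := by
    have q1 := mul_nonneg (mul_nonneg hps.le hkr.le) hw40.le
    have q2 := mul_nonneg (mul_nonneg hp1.le hkr.le) hw50.le
    linarith only [q1, q2, mul_pos hkr hw00]
  have Q3 := mul_le_mul_of_nonneg_left hZZ3 hNL3
  have Q6 := mul_le_mul_of_nonneg_left hZZ6 hNL6
  have hCc2 : (ks*w0 + (1-p)*(1-mu)*ks*w1 + p*(1-mu)*ks*w2 + (1-p)*mu*ks*w4 + p*mu*ks*w5) * (V^2/(w0*w3))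
      + (kr*w0 + (1-p)*kr*w4 + p*kr*w5) * (V^2/(w0*w6)) = Cc * V^2 := by
    rw [hCc]; ring
  have bracket : (-dT * w0) * |z0|
          + (-dI * w1 + Ns * dI * w3) * |z1|
          + (αs * w1 - (αs + dL) * w2) * |z2|
          + (a * w0 + (1-p)*(1-mu)*a*w1 + p*(1-mu)*a*w2 + (1-p)*mu*a*w4 + p*mu*a*w5 - dV*w3) * |z3|
          + (-dI * w4 + Nr * dI * w6) * |z4|
          + (αr * w4 - (αr + dL) * w5) * |z5|
          + (b * w0 + (1-p)*b*w4 + p*b*w5 - dV*w6) * |z6|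
          + (ks*w0 + (1-p)*(1-mu)*ks*w1 + p*(1-mu)*ks*w2 + (1-p)*mu*ks*w4 + p*mu*ks*w5) * (|z0| * |z3|)
          + (kr*w0 + (1-p)*kr*w4 + p*kr*w5) * (|z0| * |z6|)
      ≤ -c * V + Cc * V^2 := by
    have hVexp : -c * V = (-c*w0)*|z0| + (-c*w1)*|z1| + (-c*w2)*|z2| + (-c*w3)*|z3|
        + (-c*w4)*|z4| + (-c*w5)*|z5| + (-c*w6)*|z6| := by rw [hV]; ring
    rw [hVexp, ← hCc2]
    linarith only [P0, P1, P2, P3, P4, P5, P6, Q3, Q6]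
  have hbr := mul_le_mul_of_nonneg_left bracket hh.le
  linarith only [S0, S1, S2, S3, S4, S5, S6, expand, hbr]

/-- Theorem 1, part 1 (stability): if `R_s < 1/(1-μ)` and `R_r < 1`, the infection-free
steady state `E_0` is locally asymptotically stable. -/
theorem E0_locally_asymptotically_stable
    (lam dT ks kr p mu dI dL αs αr Ns Nr dV Rr Rs : ℝ)
    (hlam : 0 < lam) (hdT : 0 < dT) (hks : 0 < ks) (hkr : 0 < kr)
    (hdI : 0 < dI) (hdL : 0 < dL) (hαs : 0 < αs) (hαr : 0 < αr)
    (hNs : 0 < Ns) (hNr : 0 < Nr) (hdV : 0 < dV)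
    (hp : p ∈ Set.Ioo (0 : ℝ) 1) (hmu : mu ∈ Set.Ioo (0 : ℝ) 1)
    (hRr : Rr = lam * kr * Nr * (αr + (1 - p) * dL) / (dT * dV * (dL + αr)))
    (hRs : Rs = lam * ks * Ns * (αs + (1 - p) * dL) / (dT * dV * (dL + αs)))
    (E0 : EuclideanSpace ℝ (Fin 7))
    (hE0 : E0 = ![lam / dT, 0, 0, 0, 0, 0, 0])
    (h1 : Rs < 1 / (1 - mu)) (h2 : Rr < 1) :
    IsLocallyAsymptoticallyStable (hivField lam dT ks kr p mu dI dL αs αr Ns Nr dV) E0 := by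
  obtain ⟨hp1, hp2⟩ := hp
  obtain ⟨hmu1, hmu2⟩ := hmu
  have hps : 0 < 1 - p := by linarith
  have hmus : 0 < 1 - mu := by linarith
  obtain ⟨a, hadef⟩ : ∃ q : ℝ, q = ks * lam / dT := ⟨_, rfl⟩
  obtain ⟨b, hbdef⟩ : ∃ q : ℝ, q = kr * lam / dT := ⟨_, rfl⟩
  have ha : 0 < a := by rw [hadef]; positivity
  have hb : 0 < b := by rw [hbdef]; positivity
  have Hs : (1 - mu) * a * Ns * (αs + (1 - p) * dL) < dV * (αs + dL) := by
    rw [hRs, div_lt_div_iff₀ (by positivity) hmus] at h1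
    rw [hadef, show (1 - mu) * (ks * lam / dT) * Ns * (αs + (1 - p) * dL)
        = lam * ks * Ns * (αs + (1 - p) * dL) * (1 - mu) / dT from by ring,
      div_lt_iff₀ hdT]
    linarith only [h1]
  have Hr : b * Nr * (αr + (1 - p) * dL) < dV * (αr + dL) := by
    rw [hRr, div_lt_one (by positivity)] at h2
    rw [hbdef, show kr * lam / dT * Nr * (αr + (1 - p) * dL)
        = lam * kr * Nr * (αr + (1 - p) * dL) / dT from by ring,
      div_lt_iff₀ hdT]
    linarith only [h2]
  obtain ⟨w0, w1, w2, w3, w4, w5, w6, c, hw00, hw10, hw20, hw30, hw40, hw50, hw60, hc0,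
    hcol0, hcol1, hcol2, hcol3, hcol4, hcol5, hcol6⟩ :=
    exists_weights a b p mu dT dI dL αs αr Ns Nr dV ha hb hdT hdI hdL hαs hαr hNs hNr hdV
      hp1 hp2 hmu1 hmu2 Hs Hr
  obtain ⟨D, hDdef⟩ : ∃ q : ℝ, q = dT + dI + (αs + dL) + dV + (αr + dL) + 1 := ⟨_, rfl⟩
  have hD0 : 0 < D := by rw [hDdef]; positivity
  obtain ⟨Cc, hCcdef⟩ : ∃ q : ℝ, q = (ks*w0 + (1-p)*(1-mu)*ks*w1 + p*(1-mu)*ks*w2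
      + (1-p)*mu*ks*w4 + p*mu*ks*w5)/(w0*w3)
      + (kr*w0 + (1-p)*kr*w4 + p*kr*w5)/(w0*w6) := ⟨_, rfl⟩
  have hCc0 : 0 < Cc := by
    rw [hCcdef]
    have q1 := mul_nonneg (mul_nonneg (mul_nonneg hps.le hmus.le) hks.le) hw10.le
    have q2 := mul_nonneg (mul_nonneg (mul_nonneg hp1.le hmus.le) hks.le) hw20.le
    have q3 := mul_nonneg (mul_nonneg (mul_nonneg hps.le hmu1.le) hks.le) hw40.le
    have q4 := mul_nonneg (mul_nonneg (mul_nonneg hp1.le hmu1.le) hks.le) hw50.le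
    have q5 := mul_nonneg (mul_nonneg hps.le hkr.le) hw40.le
    have q6 := mul_nonneg (mul_nonneg hp1.le hkr.le) hw50.le
    have hn1 : 0 < ks*w0 + (1-p)*(1-mu)*ks*w1 + p*(1-mu)*ks*w2 + (1-p)*mu*ks*w4 + p*mu*ks*w5 := by
      linarith only [q1, q2, q3, q4, mul_pos hks hw00]
    have hn2 : 0 < kr*w0 + (1-p)*kr*w4 + p*kr*w5 := by
      linarith only [q5, q6, mul_pos hkr hw00]
    have d1 := div_pos hn1 (mul_pos hw00 hw30)
    have d2 := div_pos hn2 (mul_pos hw00 hw60)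
    linarith only [d1, d2]
  obtain ⟨w', hw'⟩ : ∃ q : Fin 7 → ℝ, q = ![w0, w1, w2, w3, w4, w5, w6] := ⟨_, rfl⟩
  have hw'pos : ∀ i, 0 < w' i := by
    rw [hw']; intro i; fin_cases i <;> assumption
  -- master decay estimate for any solution
  have master : ∀ x : ℝ → EuclideanSpace ℝ (Fin 7),
      (∀ t : ℝ, 0 ≤ t →
        HasDerivAt x (hivField lam dT ks kr p mu dI dL αs αr Ns Nr dV (x t)) t) →
      (∑ i, w' i * |x 0 i - E0 i|) < c / (2 * Cc) →
      ∀ t : ℝ, 0 ≤ t →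
        (∑ i, w' i * |x t i - E0 i|) ≤ (∑ i, w' i * |x 0 i - E0 i|) * exp (-(c / 2) * t) := by
    intro x hx hinit
    have hVeval : ∀ s : ℝ, (∑ i, w' i * |x s i - E0 i|)
        = w0*|x s 0 - lam/dT| + w1*|x s 1 - 0| + w2*|x s 2 - 0| + w3*|x s 3 - 0|
          + w4*|x s 4 - 0| + w5*|x s 5 - 0| + w6*|x s 6 - 0| := by
      intro s
      rw [Fin.sum_univ_seven, hw', hE0]
      rfl
    refine decay_lemma (V := fun s => ∑ i, w' i * |x s i - E0 i|) hc0 hCc0 ?_ ?_ ?_ hinit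
    · -- continuity
      have hfun : (fun s => ∑ i, w' i * |x s i - E0 i|)
          = fun s => w0*|x s 0 - lam/dT| + w1*|x s 1 - 0| + w2*|x s 2 - 0| + w3*|x s 3 - 0|
            + w4*|x s 4 - 0| + w5*|x s 5 - 0| + w6*|x s 6 - 0| := funext hVeval
      rw [hfun]
      intro t ht
      apply ContinuousAt.continuousWithinAt
      have hca : ∀ i : Fin 7, ContinuousAt (fun s => x s i) t :=
        fun i => (coord_deriv x _ t (hx t ht) i).continuousAt
      have g0 : ContinuousAt (fun s => w0 * |x s 0 - lam/dT|) t :=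
        (((hca 0).sub continuousAt_const).abs).const_mul w0
      have g1 : ContinuousAt (fun s => w1 * |x s 1 - 0|) t :=
        (((hca 1).sub continuousAt_const).abs).const_mul w1
      have g2 : ContinuousAt (fun s => w2 * |x s 2 - 0|) t :=
        (((hca 2).sub continuousAt_const).abs).const_mul w2
      have g3 : ContinuousAt (fun s => w3 * |x s 3 - 0|) t :=
        (((hca 3).sub continuousAt_const).abs).const_mul w3
      have g4 : ContinuousAt (fun s => w4 * |x s 4 - 0|) t :=
        (((hca 4).sub continuousAt_const).abs).const_mul w4
      have g5 : ContinuousAt (fun s => w5 * |x s 5 - 0|) t :=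
        (((hca 5).sub continuousAt_const).abs).const_mul w5
      have g6 : ContinuousAt (fun s => w6 * |x s 6 - 0|) t :=
        (((hca 6).sub continuousAt_const).abs).const_mul w6
      exact ((((((g0.add g1).add g2).add g3).add g4).add g5).add g6)
    · intro t _
      exact Finset.sum_nonneg fun i _ => mul_nonneg (hw'pos i).le (abs_nonneg _)
    · -- slope estimate
      intro t ht r hr
      refine (slope_freq w' hw'pos (hx t ht)
        (h0 := 1 / D) (by positivity) ?_ hr).frequently
      intro h hh hhD
      have hhD1 : h * D ≤ 1 := by rwa [le_div_iff₀ hD0] at hhD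
      have hVt : (∑ i, w' i * |x t i - E0 i|)
          = w0*|x t 0 - lam/dT| + w1*|x t 1| + w2*|x t 2| + w3*|x t 3| + w4*|x t 4|
            + w5*|x t 5| + w6*|x t 6| := by
        rw [hVeval t]; simp only [sub_zero]
      have KEY := key_ineq a b ks kr p mu dT dI dL αs αr Ns Nr dV w0 w1 w2 w3 w4 w5 w6 c Cc D
        ha hb hks hkr hdT hdI hdL hαs hαr hNs hNr hdV hp1 hp2 hmu1 hmu2
        hw00 hw10 hw20 hw30 hw40 hw50 hw60 hDdef hCcdef
        hcol0 hcol1 hcol2 hcol3 hcol4 hcol5 hcol6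
        (x t 0 - lam/dT) (x t 1) (x t 2) (x t 3) (x t 4) (x t 5) (x t 6) h
        (∑ i, w' i * |x t i - E0 i|) hh hhD1 hVt
      have hBeval : (∑ i, w' i *
            |x t i - E0 i + h * hivField lam dT ks kr p mu dI dL αs αr Ns Nr dV (x t) i|)
          = w0*|x t 0 - lam/dT + h*(lam - dT * x t 0 - ks * x t 0 * x t 3 - kr * x t 0 * x t 6)|
          + w1*|x t 1 - 0 + h*((1 - p) * (1 - mu) * ks * x t 0 * x t 3 + αs * x t 2 - dI * x t 1)|
          + w2*|x t 2 - 0 + h*(p * (1 - mu) * ks * x t 0 * x t 3 - (αs + dL) * x t 2)|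
          + w3*|x t 3 - 0 + h*(Ns * dI * x t 1 - dV * x t 3)|
          + w4*|x t 4 - 0 + h*((1 - p) * mu * ks * x t 0 * x t 3 + (1 - p) * kr * x t 0 * x t 6
              + αr * x t 5 - dI * x t 4)|
          + w5*|x t 5 - 0 + h*(p * mu * ks * x t 0 * x t 3 + p * kr * x t 0 * x t 6
              - (αr + dL) * x t 5)|
          + w6*|x t 6 - 0 + h*(Nr * dI * x t 4 - dV * x t 6)| := by
        rw [Fin.sum_univ_seven, hw', hE0]
        rfl
      rw [hBeval]
      have e0 : x t 0 - lam/dT + h*(lam - dT * x t 0 - ks * x t 0 * x t 3 - kr * x t 0 * x t 6)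
          = (x t 0 - lam/dT) + h*(-dT*(x t 0 - lam/dT) - a*(x t 3) - b*(x t 6)
            - ks*((x t 0 - lam/dT)*(x t 3)) - kr*((x t 0 - lam/dT)*(x t 6))) := by
        rw [hadef, hbdef]; field_simp; ring
      have e1 : x t 1 - 0 + h*((1 - p) * (1 - mu) * ks * x t 0 * x t 3 + αs * x t 2 - dI * x t 1)
          = (x t 1) + h*((1-p)*(1-mu)*(a*(x t 3) + ks*((x t 0 - lam/dT)*(x t 3)))
            + αs*(x t 2) - dI*(x t 1)) := by
        rw [hadef]; field_simp; ring
      have e2 : x t 2 - 0 + h*(p * (1 - mu) * ks * x t 0 * x t 3 - (αs + dL) * x t 2)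
          = (x t 2) + h*(p*(1-mu)*(a*(x t 3) + ks*((x t 0 - lam/dT)*(x t 3)))
            - (αs+dL)*(x t 2)) := by
        rw [hadef]; field_simp; ring
      have e3 : x t 3 - 0 + h*(Ns * dI * x t 1 - dV * x t 3)
          = (x t 3) + h*(Ns*dI*(x t 1) - dV*(x t 3)) := by ring
      have e4 : x t 4 - 0 + h*((1 - p) * mu * ks * x t 0 * x t 3 + (1 - p) * kr * x t 0 * x t 6
              + αr * x t 5 - dI * x t 4)
          = (x t 4) + h*((1-p)*mu*(a*(x t 3) + ks*((x t 0 - lam/dT)*(x t 3)))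
            + (1-p)*(b*(x t 6) + kr*((x t 0 - lam/dT)*(x t 6))) + αr*(x t 5) - dI*(x t 4)) := by
        rw [hadef, hbdef]; field_simp; ring
      have e5 : x t 5 - 0 + h*(p * mu * ks * x t 0 * x t 3 + p * kr * x t 0 * x t 6
              - (αr + dL) * x t 5)
          = (x t 5) + h*(p*mu*(a*(x t 3) + ks*((x t 0 - lam/dT)*(x t 3)))
            + p*(b*(x t 6) + kr*((x t 0 - lam/dT)*(x t 6))) - (αr+dL)*(x t 5)) := by
        rw [hadef, hbdef]; field_simp; ring
      have e6 : x t 6 - 0 + h*(Nr * dI * x t 4 - dV * x t 6)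
          = (x t 6) + h*(Nr*dI*(x t 4) - dV*(x t 6)) := by ring
      rw [e0, e1, e2, e3, e4, e5, e6]
      exact KEY
  -- norm comparison
  obtain ⟨wm, hwmdef⟩ : ∃ q : ℝ, q = min w0 (min w1 (min w2 (min w3 (min w4 (min w5 w6))))) :=
    ⟨_, rfl⟩
  have hwm0 : 0 < wm := by
    rw [hwmdef]
    exact lt_min hw00 (lt_min hw10 (lt_min hw20 (lt_min hw30 (lt_min hw40 (lt_min hw50 hw60)))))
  have hwmle : ∀ i : Fin 7, wm ≤ w' i := by
    rw [hw', hwmdef]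
    intro i; fin_cases i
    · exact min_le_left _ _
    · exact le_trans (min_le_right _ _) (min_le_left _ _)
    · exact le_trans (min_le_right _ _) (le_trans (min_le_right _ _) (min_le_left _ _))
    · exact le_trans (min_le_right _ _) (le_trans (min_le_right _ _)
        (le_trans (min_le_right _ _) (min_le_left _ _)))
    · exact le_trans (min_le_right _ _) (le_trans (min_le_right _ _)
        (le_trans (min_le_right _ _) (le_trans (min_le_right _ _) (min_le_left _ _))))
    · exact le_trans (min_le_right _ _) (le_trans (min_le_right _ _)
        (le_trans (min_le_right _ _) (le_trans (min_le_right _ _)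
        (le_trans (min_le_right _ _) (min_le_left _ _)))))
    · exact le_trans (min_le_right _ _) (le_trans (min_le_right _ _)
        (le_trans (min_le_right _ _) (le_trans (min_le_right _ _)
        (le_trans (min_le_right _ _) (min_le_right _ _)))))
  obtain ⟨Wsum, hWdef⟩ : ∃ q : ℝ, q = w0 + w1 + w2 + w3 + w4 + w5 + w6 := ⟨_, rfl⟩
  have hW0 : 0 < Wsum := by
    rw [hWdef]
    linarith only [hw00, hw10, hw20, hw30, hw40, hw50, hw60]
  have hlow : ∀ y : EuclideanSpace ℝ (Fin 7), wm * ‖y - E0‖ ≤ ∑ i, w' i * |y i - E0 i| := by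
    intro y
    have hn : ‖y - E0‖ ≤ ∑ i, |y i - E0 i| := euclid7_norm_le_sum (y - E0)
    calc wm * ‖y - E0‖ ≤ wm * ∑ i, |y i - E0 i| := mul_le_mul_of_nonneg_left hn hwm0.le
      _ = ∑ i, wm * |y i - E0 i| := Finset.mul_sum _ _ _
      _ ≤ ∑ i, w' i * |y i - E0 i| :=
          Finset.sum_le_sum fun i _ => mul_le_mul_of_nonneg_right (hwmle i) (abs_nonneg _)
  have hup : ∀ y : EuclideanSpace ℝ (Fin 7),
      (∑ i, w' i * |y i - E0 i|) ≤ Wsum * ‖y - E0‖ := by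
    intro y
    have hcd : ∀ i : Fin 7, |y i - E0 i| ≤ ‖y - E0‖ := fun i => euclid7_coord_le (y - E0) i
    calc (∑ i, w' i * |y i - E0 i|) ≤ ∑ i, w' i * ‖y - E0‖ :=
          Finset.sum_le_sum fun i _ => mul_le_mul_of_nonneg_left (hcd i) (hw'pos i).le
      _ = (∑ i, w' i) * ‖y - E0‖ := (Finset.sum_mul _ _ _).symm
      _ = Wsum * ‖y - E0‖ := by
          rw [hw', Fin.sum_univ_seven, hWdef]
          rfl
  constructor
  · -- stability
    intro ε hε
    obtain ⟨δ, hδdef⟩ : ∃ q : ℝ, q = min (c / (2 * Cc)) (wm * ε / 2) / (Wsum + 1) := ⟨_, rfl⟩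
    have hmin0 : 0 < min (c / (2 * Cc)) (wm * ε / 2) :=
      lt_min (by positivity) (by positivity)
    have hδ0 : 0 < δ := by rw [hδdef]; exact div_pos hmin0 (by linarith)
    refine ⟨δ, hδ0, ?_⟩
    intro x hx hx0 t htt
    have hV0up : (∑ i, w' i * |x 0 i - E0 i|) < min (c / (2 * Cc)) (wm * ε / 2) := by
      have s1 : (∑ i, w' i * |x 0 i - E0 i|) ≤ Wsum * ‖x 0 - E0‖ := hup (x 0)
      have s2 : Wsum * ‖x 0 - E0‖ < Wsum * δ := mul_lt_mul_of_pos_left hx0 hW0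
      have s3 : Wsum * δ < min (c / (2 * Cc)) (wm * ε / 2) := by
        rw [hδdef, show Wsum * (min (c / (2 * Cc)) (wm * ε / 2) / (Wsum + 1))
          = min (c / (2 * Cc)) (wm * ε / 2) * Wsum / (Wsum + 1) from by ring,
          div_lt_iff₀ (by linarith only [hW0] : (0:ℝ) < Wsum + 1)]
        linarith only [hmin0]
      linarith only [s1, s2, s3]
    have hinit : (∑ i, w' i * |x 0 i - E0 i|) < c / (2 * Cc) :=
      lt_of_lt_of_le hV0up (min_le_left _ _)
    have hdec := master x hx hinit t htt
    have hexp1 : exp (-(c / 2) * t) ≤ 1 := by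
      apply exp_le_one_iff.mpr
      have hct := mul_nonneg hc0.le htt
      linarith only [hct]
    have hV0nn : 0 ≤ (∑ i, w' i * |x 0 i - E0 i|) :=
      Finset.sum_nonneg fun i _ => mul_nonneg (hw'pos i).le (abs_nonneg _)
    have hVt0 : (∑ i, w' i * |x t i - E0 i|) ≤ (∑ i, w' i * |x 0 i - E0 i|) := by
      have hm := mul_le_mul_of_nonneg_left hexp1 hV0nn
      rw [mul_one] at hm
      linarith only [hdec, hm]
    have hl := hlow (x t)
    have : wm * ‖x t - E0‖ < wm * (ε / 2) := by
      have hm2 : (∑ i, w' i * |x 0 i - E0 i|) < wm * ε / 2 :=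
        lt_of_lt_of_le hV0up (min_le_right _ _)
      linarith only [hl, hVt0, hm2]
    have hfin : ‖x t - E0‖ < ε / 2 := lt_of_mul_lt_mul_left this hwm0.le
    linarith only [hfin, hε]
  · -- attraction
    obtain ⟨δ₀, hδ₀def⟩ : ∃ q : ℝ, q = (c / (2 * Cc)) / (Wsum + 1) := ⟨_, rfl⟩
    have hδ₀0 : 0 < δ₀ := by rw [hδ₀def]; exact div_pos (by positivity) (by linarith)
    refine ⟨δ₀, hδ₀0, ?_⟩
    intro x hx hx0
    have hinit : (∑ i, w' i * |x 0 i - E0 i|) < c / (2 * Cc) := by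
      have s1 : (∑ i, w' i * |x 0 i - E0 i|) ≤ Wsum * ‖x 0 - E0‖ := hup (x 0)
      have s2 : Wsum * ‖x 0 - E0‖ < Wsum * δ₀ := mul_lt_mul_of_pos_left hx0 hW0
      have s3 : Wsum * δ₀ < c / (2 * Cc) := by
        rw [hδ₀def, show Wsum * (c / (2 * Cc) / (Wsum + 1))
          = (c / (2 * Cc)) * Wsum / (Wsum + 1) from by ring,
          div_lt_iff₀ (by linarith only [hW0] : (0:ℝ) < Wsum + 1)]
        linarith only [div_pos hc0 (by positivity : (0:ℝ) < 2 * Cc)]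
      linarith
    have hdec := master x hx hinit
    rw [tendsto_iff_norm_sub_tendsto_zero]
    have hg : Tendsto (fun t : ℝ =>
        (∑ i, w' i * |x 0 i - E0 i|) / wm * exp (-(c / 2) * t)) atTop (𝓝 0) := by
      have l1 : Tendsto (fun t : ℝ => -(c / 2) * t) atTop atBot :=
        (tendsto_const_mul_atBot_of_neg (by linarith)).mpr tendsto_id
      have l2 := Real.tendsto_exp_atBot.comp l1
      have l3 := l2.const_mul ((∑ i, w' i * |x 0 i - E0 i|) / wm)
      simpa using l3
    refine tendsto_of_tendsto_of_tendsto_of_le_of_le' tendsto_const_nhds hg ?_ ?_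
    · exact Eventually.of_forall fun t => norm_nonneg _
    · filter_upwards [eventually_ge_atTop (0:ℝ)] with t htt
      have hl := hlow (x t)
      have hd := hdec t htt
      rw [show (∑ i, w' i * |x 0 i - E0 i|) / wm * exp (-(c / 2) * t)
        = ((∑ i, w' i * |x 0 i - E0 i|) * exp (-(c / 2) * t)) / wm from by ring,
        le_div_iff₀' hwm0]
      linarith only [hl, hd]
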